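/- There exists a simple graph on 25 vertices that is 12-regular and triangle-distinct. -/

import Mathlib

/-- The triangle-degree of a vertex `v` of a simple graph `G`: the number of triangles
(3-cliques) of `G` that contain `v`. -/
noncomputable def triangleDegree {V : Type*} (G : SimpleGraph V) (v : V) : ℕ :=
  {s | s ∈ G.cliqueSet 3 ∧ v ∈ s}.ncard

/-- A simple graph is triangle-distinct if all its vertices have pairwise distinct
triangle-degrees. -/
def TriangleDistinct {V : Type*} (G : SimpleGraph V) : Prop :=
  Function.Injective (triangleDegree G)

/-- Adjacency bitmasks of our 12-regular triangle-distinct graph on 25 vertices. -/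
def tdMask : Fin 25 → ℕ :=
  ![20628912, 32354496, 31824976, 28173360, 1722285, 1763097, 31832070, 5925651,
    20276401, 12121264, 5786429, 11384004, 31795782, 12721130, 1738681, 5393007,
    29759822, 19783857, 13834574, 1199803, 2934705, 17963855, 25539782, 21314126,
    14881103]

def tdAdj (v u : Fin 25) : Bool := (tdMask v).testBit u.val

lemma tdAdj_symm : ∀ v u : Fin 25, tdAdj v u = tdAdj u v := by decide

lemma tdAdj_irrefl : ∀ v : Fin 25, tdAdj v v = false := by decide

/-- The graph. -/
def tdGraph : SimpleGraph (Fin 25) where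
  Adj v u := tdAdj v u = true
  symm := by refine ⟨?_⟩; intro v u h; rwa [tdAdj_symm]
  loopless := by refine ⟨?_⟩; intro v h; simp [tdAdj_irrefl] at h

instance : DecidableRel tdGraph.Adj :=
  fun v u => inferInstanceAs (Decidable (tdAdj v u = true))

/-- Computable pair-count version of the triangle degree. -/
def pairCount {V : Type*} [Fintype V] [LinearOrder V] (G : SimpleGraph V)
    [DecidableRel G.Adj] (v : V) : ℕ :=
  (Finset.univ.filter
    (fun p : V × V => p.1 < p.2 ∧ G.Adj v p.1 ∧ G.Adj v p.2 ∧ G.Adj p.1 p.2)).card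

lemma triangleDegree_eq_pairCount {V : Type*} [Fintype V] [LinearOrder V]
    (G : SimpleGraph V) [DecidableRel G.Adj] (v : V) :
    triangleDegree G v = pairCount G v := by
  classical
  set F : Finset (V × V) := Finset.univ.filter
      (fun p : V × V => p.1 < p.2 ∧ G.Adj v p.1 ∧ G.Adj v p.2 ∧ G.Adj p.1 p.2) with hF
  have hset : {s | s ∈ G.cliqueSet 3 ∧ v ∈ s}
      = (fun p : V × V => ({v, p.1, p.2} : Finset V)) '' (F : Set (V × V)) := by
    ext s
    simp only [Set.mem_setOf_eq, SimpleGraph.mem_cliqueSet_iff, Set.mem_image,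
      Finset.mem_coe, hF, Finset.mem_filter, Finset.mem_univ, true_and]
    constructor
    · rintro ⟨hclique, hv⟩
      have hcard : s.card = 3 := hclique.card_eq
      have hcard2 : (s.erase v).card = 2 := by
        rw [Finset.card_erase_of_mem hv, hcard]
      obtain ⟨a, b, hab, ht⟩ := Finset.card_eq_two.mp hcard2
      have hs' : s = insert v (s.erase v) := (Finset.insert_erase hv).symm
      have ha' : a ∈ s.erase v := by rw [ht]; exact Finset.mem_insert_self a {b}
      have hb' : b ∈ s.erase v := by
        rw [ht]; exact Finset.mem_insert_of_mem (Finset.mem_singleton_self b)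
      have ha : a ∈ s := Finset.mem_of_mem_erase ha'
      have hb : b ∈ s := Finset.mem_of_mem_erase hb'
      have hva : v ≠ a := (Finset.ne_of_mem_erase ha').symm
      have hvb : v ≠ b := (Finset.ne_of_mem_erase hb').symm
      have hadj : ∀ x y, x ∈ s → y ∈ s → x ≠ y → G.Adj x y := fun x y hx hy hxy =>
        hclique.1 hx hy hxy
      rcases lt_or_gt_of_ne hab with h1 | h1
      · exact ⟨(a, b), ⟨h1, hadj v a hv ha hva, hadj v b hv hb hvb, hadj a b ha hb hab⟩,
          by rw [hs', ht]⟩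
      · exact ⟨(b, a), ⟨h1, hadj v b hv hb hvb, hadj v a hv ha hva,
          (hadj a b ha hb hab).symm⟩, by
            rw [hs', ht, Finset.pair_comm a b]⟩
    · rintro ⟨⟨a, b⟩, ⟨hab, hva, hvb, hadj⟩, rfl⟩
      refine ⟨SimpleGraph.is3Clique_triple_iff.mpr ⟨hva, hvb, hadj⟩,
        Finset.mem_insert_self v _⟩
  have hinj : Set.InjOn (fun p : V × V => ({v, p.1, p.2} : Finset V)) (F : Set (V × V)) := by
    rintro ⟨a, b⟩ hp ⟨c, d⟩ hq h
    simp only [hF, Finset.coe_filter, Set.mem_setOf_eq, Finset.mem_univ, true_and] at hp hq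
    obtain ⟨hab, hva, hvb, -⟩ := hp
    obtain ⟨hcd, hvc, hvd, -⟩ := hq
    simp only at h
    have hva' : v ≠ a := hva.ne
    have hvb' : v ≠ b := hvb.ne
    have hvc' : v ≠ c := hvc.ne
    have hvd' : v ≠ d := hvd.ne
    have hna : v ∉ ({a, b} : Finset V) := by simp [hva', hvb']
    have hnc : v ∉ ({c, d} : Finset V) := by simp [hvc', hvd']
    have h2 : ({a, b} : Finset V) = {c, d} := by
      rw [← Finset.erase_insert hna, ← Finset.erase_insert hnc, h]
    have h3 : ({a, b} : Set V) = {c, d} := by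
      have := congrArg (fun t : Finset V => (t : Set V)) h2
      simpa using this
    rcases Set.pair_eq_pair_iff.mp h3 with ⟨rfl, rfl⟩ | ⟨rfl, rfl⟩
    · rfl
    · exact absurd hab (asymm hcd)
  rw [triangleDegree, hset, Set.ncard_image_of_injOn hinj, Set.ncard_coe_finset, hF, pairCount]

def tdTri : Fin 25 → ℕ :=
  ![40, 32, 35, 20, 41, 43, 45, 31, 28, 29, 33, 27, 44, 26, 46, 21, 38, 24, 30, 37,
    39, 22, 36, 42, 34]

set_option maxRecDepth 20000 in
set_option maxHeartbeats 4000000 in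
lemma tdGraph_pairCount_eq : pairCount tdGraph = tdTri := by
  funext v
  revert v
  decide

lemma tdTri_injective : Function.Injective tdTri := by decide

lemma tdGraph_pairCount_injective : Function.Injective (pairCount tdGraph) := by
  rw [tdGraph_pairCount_eq]; exact tdTri_injective

open scoped Classical in
/-- There exists a simple graph on 25 vertices that is 12-regular and triangle-distinct. -/
theorem exists_regular_triangle_distinct_25_12 :
    ∃ G : SimpleGraph (Fin 25), G.IsRegularOfDegree 12 ∧ TriangleDistinct G := by
  refine ⟨tdGraph, ?_, ?_⟩
  · have h : ∀ v : Fin 25, tdGraph.degree v = 12 := by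
      set_option maxHeartbeats 1000000 in decide
    intro v
    convert h v using 2
  · have h : triangleDegree tdGraph = pairCount tdGraph :=
      funext (triangleDegree_eq_pairCount tdGraph)
    rw [TriangleDistinct, h]
    exact tdGraph_pairCount_injective
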